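/- Truncated-expectation representation: let L : ℝ → ℝ be Borel measurable with L(X) integrable for X ~ TD(θ), let b ∈ ℝ, and write W_{μ,σ} = σW + μ. If b < μ, then E[𝟙{X ≤ b}·L(X)] = (ρσ/Z_θ)·E[𝟙{W ≤ (b−μ)/σ}·L(W_{μ,σ})] + (δσ/Z_θ)·{ E[𝟙{Y ≤ ((b−μ)/(ασ))², W ≤ (b−μ)/σ}·L(W_{μ,σ})] + E[𝟙{Y ≥ ((b−μ)/(ασ))², W ≤ −α√Y}·L(W_{μ,σ})] }. If b ≥ μ, then E[𝟙{X ≤ b}·L(X)] = (ρσ/Z_θ)·E[𝟙{W ≤ (b−μ)/σ}·L(W_{μ,σ})] + (δσ/Z_θ)·{ E[𝟙{W ≤ −α√Y}·L(W_{μ,σ})] + E[𝟙{Y ≤ ((b−μ)/(ασ))², α√Y ≤ W ≤ (b−μ)/σ}·L(W_{μ,σ})] }. Here E[𝟙{X ≤ b}·L(X)] = ∫_{−∞}^b L(x)·f(x; θ) dx, and the expectations on the right are the corresponding double integrals in (w, y) against the densities g(w) and y^{p−1}e^{−y}/Γ(p). -/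

import Mathlib

open MeasureTheory Real Set Filter

noncomputable def lincGamma (p u : ℝ) : ℝ := ∫ w in (0:ℝ)..u, w ^ (p - 1) * Real.exp (-w)

noncomputable def Tfun (p α x : ℝ) : ℝ := lincGamma p (x ^ 2 / α ^ 2) / Real.Gamma p

noncomputable def gammaPDF (p y : ℝ) : ℝ := y ^ (p - 1) * Real.exp (-y) / Real.Gamma p

noncomputable def Znorm (p σ α ρ δ : ℝ) (g : ℝ → ℝ) : ℝ :=
  σ * ∫ w : ℝ, (ρ + δ * Tfun p α w) * g w

noncomputable def tdPDF (p μ σ α ρ δ : ℝ) (g : ℝ → ℝ) (x : ℝ) : ℝ :=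
  (1 / Znorm p σ α ρ δ g) * (ρ + δ * Tfun p α ((x - μ) / σ)) * g ((x - μ) / σ)

noncomputable def cdfOf (d : ℝ → ℝ) (x : ℝ) : ℝ := ∫ t in Iic x, d t

/-!
Substituting `x = σ w + μ` turns the left side into `(σ / Z) ∫_{w ≤ c} h(w) (ρ + δ T(w)) dw`
with `c = (b - μ) / σ` and `h(w) = L(σ w + μ) g(w)`. Since `T(w) = P(0 < Y ≤ w² / α²)`, the
`δ`-part is the integral of `h(w) γ_p(y)` over the region `{w ≤ c, 0 < y ≤ w² / α²}`, and Fubini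
turns it into the `y`-integral of `∫ h` over the section `{w ≤ c, α √y ≤ |w|}`. For `c < 0` this
section is `(-∞, c]` when `y ≤ (c/α)²` and `(-∞, -α √y]` otherwise; for `c ≥ 0` it is
`(-∞, -α √y] ∪ [α √y, c]`, whose second piece is empty when `y > (c/α)²`.
-/

theorem measurable_gammaPDF (p : ℝ) : Measurable (gammaPDF p) := by
  unfold gammaPDF
  fun_prop

theorem gammaPDF_nonneg {p y : ℝ} (hp : 0 < p) (hy : 0 ≤ y) : 0 ≤ gammaPDF p y := by
  have := Real.Gamma_pos_of_pos hp
  unfold gammaPDF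
  positivity

theorem integrableOn_gammaPDF_Ioi {p : ℝ} (hp : 0 < p) : IntegrableOn (gammaPDF p) (Ioi 0) := by
  refine IntegrableOn.congr_fun ((Real.GammaIntegral_convergent hp).mul_const (Real.Gamma p)⁻¹)
    (fun y _ => ?_) measurableSet_Ioi
  rw [gammaPDF]
  ring

theorem Tfun_eq_setIntegral (p α w : ℝ) :
    Tfun p α w = ∫ y in Ioc 0 (w ^ 2 / α ^ 2), gammaPDF p y := by
  rw [Tfun, lincGamma, intervalIntegral.integral_of_le (by positivity), ← integral_div]
  rfl

theorem Tfun_nonneg {p : ℝ} (hp : 0 < p) (α w : ℝ) : 0 ≤ Tfun p α w := by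
  rw [Tfun_eq_setIntegral]
  exact setIntegral_nonneg measurableSet_Ioc fun y hy => gammaPDF_nonneg hp hy.1.le

theorem measurable_Tfun {p : ℝ} (hp : 0 < p) (α : ℝ) : Measurable (Tfun p α) := by
  have hmono : Monotone fun u => ∫ y in Ioc 0 u, gammaPDF p y := fun u v huv =>
    setIntegral_mono_set ((integrableOn_gammaPDF_Ioi hp).mono_set Ioc_subset_Ioi_self)
      ((ae_restrict_iff' measurableSet_Ioc).2 (ae_of_all _ fun y hy => gammaPDF_nonneg hp hy.1.le))
      (Ioc_subset_Ioc_right huv).eventuallyLE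
  rw [show Tfun p α = (fun u => ∫ y in Ioc 0 u, gammaPDF p y) ∘ fun w => w ^ 2 / α ^ 2 from
    funext (Tfun_eq_setIntegral p α)]
  exact hmono.measurable.comp (by fun_prop)

theorem le_sq_div_sq_iff {α : ℝ} (hα : 0 < α) (y w : ℝ) :
    y ≤ w ^ 2 / α ^ 2 ↔ α * √y ≤ |w| := by
  rw [← Real.sqrt_le_sqrt_iff (by positivity), Real.sqrt_div' _ (by positivity),
    Real.sqrt_sq_eq_abs, Real.sqrt_sq hα.le, le_div_iff₀ hα, mul_comm]

theorem sq_div_sq_lt_iff {α : ℝ} (hα : 0 < α) (y w : ℝ) : w ^ 2 / α ^ 2 < y ↔ |w| < α * √y := by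
  rw [← not_le, le_sq_div_sq_iff hα, not_le]

theorem setIntegral_Iic_comp_mul_add {E : Type*} [NormedAddCommGroup E] [NormedSpace ℝ E]
    (F : ℝ → E) {σ : ℝ} (hσ : 0 < σ) (μ b : ℝ) :
    ∫ x in Iic b, F x = σ • ∫ w in Iic ((b - μ) / σ), F (σ * w + μ) := by
  have hpre : (fun w => σ * w + μ) ⁻¹' Iic b = Iic ((b - μ) / σ) := by
    ext w
    simp only [mem_preimage, mem_Iic, le_div_iff₀ hσ]
    constructor <;> intro <;> linarith
  calc ∫ x in Iic b, F x = ∫ x, (Iic b).indicator F x := (integral_indicator measurableSet_Iic).symm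
    _ = σ • ∫ w, (Iic b).indicator F (σ * w + μ) := by
      rw [Measure.integral_comp_mul_left (fun x => (Iic b).indicator F (x + μ)),
        integral_add_right_eq_self, abs_of_pos (inv_pos.2 hσ), smul_smul,
        mul_inv_cancel₀ hσ.ne', one_smul]
    _ = σ • ∫ w in Iic ((b - μ) / σ), F (σ * w + μ) := by
      rw [← hpre, ← integral_indicator (measurableSet_Iic.preimage (by fun_prop))]
      rfl

section Split

variable {X : Type*} [MeasurableSpace X] {m : Measure X} {s : Set X} {h T : X → ℝ} {ρ δ : ℝ}

theorem integrableOn_of_integrableOn_mul_add (hρ : 0 ≤ ρ) (hδ : 0 ≤ δ) (hT : ∀ x, 0 ≤ T x)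
    (hm : AEStronglyMeasurable h (m.restrict s)) (hTm : AEStronglyMeasurable T (m.restrict s))
    (hint : IntegrableOn (fun x => h x * (ρ + δ * T x)) s m) :
    IntegrableOn (fun x => ρ * h x) s m ∧ IntegrableOn (fun x => δ * (h x * T x)) s m := by
  have hρδT : ∀ x, ‖h x * (ρ + δ * T x)‖ = ρ * ‖h x‖ + δ * (‖h x‖ * T x) := fun x => by
    rw [norm_mul, Real.norm_of_nonneg (add_nonneg hρ (mul_nonneg hδ (hT x)))]
    ring
  refine ⟨Integrable.mono hint (hm.const_mul ρ) (ae_of_all _ fun x => ?_),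
    Integrable.mono hint ((hm.mul hTm).const_mul δ) (ae_of_all _ fun x => ?_)⟩
  · rw [norm_mul, Real.norm_of_nonneg hρ, hρδT]
    have := mul_nonneg hδ (mul_nonneg (norm_nonneg (h x)) (hT x))
    linarith
  · rw [norm_mul, norm_mul, Real.norm_of_nonneg hδ, Real.norm_of_nonneg (hT x), hρδT]
    have := mul_nonneg hρ (norm_nonneg (h x))
    linarith

theorem setIntegral_mul_add (hρ : 0 ≤ ρ) (hδ : 0 ≤ δ) (hT : ∀ x, 0 ≤ T x)
    (hm : AEStronglyMeasurable h (m.restrict s)) (hTm : AEStronglyMeasurable T (m.restrict s))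
    (hint : IntegrableOn (fun x => h x * (ρ + δ * T x)) s m) :
    ∫ x in s, h x * (ρ + δ * T x) ∂m = ρ * ∫ x in s, h x ∂m + δ * ∫ x in s, h x * T x ∂m := by
  obtain ⟨hρh, hδhT⟩ := integrableOn_of_integrableOn_mul_add hρ hδ hT hm hTm hint
  rw [← integral_const_mul, ← integral_const_mul, ← integral_add hρh hδhT]
  congr 1 with x
  ring

end Split

section Sections

variable {X Y M : Type*} [Zero M]

theorem indicator_setOf_fst_snd_apply (B : Set X) (J : X → Set Y) (f : X × Y → M)
    (x : X) (y : Y) :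
    {z : X × Y | z.1 ∈ B ∧ z.2 ∈ J z.1}.indicator f (x, y)
      = B.indicator (fun x => (J x).indicator (fun y => f (x, y)) y) x := by
  by_cases hx : x ∈ B <;> by_cases hy : y ∈ J x <;> simp [indicator, hx, hy]

theorem indicator_setOf_snd_fst_apply (B : Set Y) (J : Y → Set X) (f : X × Y → M)
    (x : X) (y : Y) :
    {z : X × Y | z.2 ∈ B ∧ z.1 ∈ J z.2}.indicator f (x, y)
      = B.indicator (fun y => (J y).indicator (fun x => f (x, y)) x) y := by
  by_cases hy : y ∈ B <;> by_cases hx : x ∈ J y <;> simp [indicator, hx, hy]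

variable [MeasurableSpace X] [MeasurableSpace Y] {μ : Measure X} {ν : Measure Y}
  [SFinite μ] [SFinite ν] {h : X → ℝ} {k : Y → ℝ} {B : Set X} {J : X → Set Y}

omit [SFinite μ] in
theorem integrableOn_prod_mul_of_sections
    (hA : MeasurableSet {z : X × Y | z.1 ∈ B ∧ z.2 ∈ J z.1}) (hB : MeasurableSet B)
    (hJ : ∀ x, MeasurableSet (J x)) (hh : AEStronglyMeasurable h μ)
    (hk : AEStronglyMeasurable k ν) (hkJ : ∀ x ∈ B, IntegrableOn k (J x) ν)
    (hint : IntegrableOn (fun x => h x * ∫ y in J x, ‖k y‖ ∂ν) B μ) :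
    IntegrableOn (fun z => h z.1 * k z.2) {z | z.1 ∈ B ∧ z.2 ∈ J z.1} (μ.prod ν) := by
  rw [← integrable_indicator_iff hA]
  refine (integrable_prod_iff ((hh.comp_fst.mul hk.comp_snd).indicator hA)).2 ?_
  simp_rw [indicator_setOf_fst_snd_apply]
  have hnorm : ∀ x, ∫ y, ‖B.indicator (fun x => (J x).indicator (fun y => h x * k y) y) x‖ ∂ν
      = B.indicator (fun x => ‖h x * ∫ y in J x, ‖k y‖ ∂ν‖) x := by
    intro x
    by_cases hx : x ∈ B
    · simp_rw [indicator_of_mem hx, norm_indicator_eq_indicator_norm, norm_mul]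
      rw [integral_indicator (hJ x), integral_const_mul,
        Real.norm_of_nonneg (integral_nonneg fun _ => norm_nonneg _)]
    · simp [hx]
  refine ⟨ae_of_all _ fun x => ?_, ?_⟩
  · by_cases hx : x ∈ B
    · simpa [hx] using IntegrableOn.integrable_indicator ((hkJ x hx).const_mul (h x)) (hJ x)
    · simp only [hx, not_false_eq_true, indicator_of_notMem]
      exact integrable_zero _ _ _
  · exact (IntegrableOn.integrable_indicator hint.norm hB).congr
      (ae_of_all _ fun x => (hnorm x).symm)

theorem setIntegral_prod_mul_of_sections
    (hA : MeasurableSet {z : X × Y | z.1 ∈ B ∧ z.2 ∈ J z.1}) (hB : MeasurableSet B)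
    (hJ : ∀ x, MeasurableSet (J x))
    (hint : IntegrableOn (fun z => h z.1 * k z.2) {z | z.1 ∈ B ∧ z.2 ∈ J z.1} (μ.prod ν)) :
    ∫ z in {z | z.1 ∈ B ∧ z.2 ∈ J z.1}, h z.1 * k z.2 ∂(μ.prod ν)
      = ∫ x in B, h x * ∫ y in J x, k y ∂ν ∂μ := by
  rw [← integral_indicator hA, integral_prod _ ((integrable_indicator_iff hA).2 hint),
    ← integral_indicator hB]
  congr 1 with x
  simp_rw [indicator_setOf_fst_snd_apply]
  by_cases hx : x ∈ B
  · simp [hx, integral_indicator (hJ x), integral_const_mul]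
  · simp [hx]

theorem setIntegral_prod_mul_of_sections_symm {B : Set Y} {J : Y → Set X}
    (hA : MeasurableSet {z : X × Y | z.2 ∈ B ∧ z.1 ∈ J z.2})
    (hB : MeasurableSet B) (hJ : ∀ y, MeasurableSet (J y))
    (hint : IntegrableOn (fun z => h z.1 * k z.2) {z | z.2 ∈ B ∧ z.1 ∈ J z.2} (μ.prod ν)) :
    ∫ z in {z | z.2 ∈ B ∧ z.1 ∈ J z.2}, h z.1 * k z.2 ∂(μ.prod ν)
      = ∫ y in B, (∫ x in J y, h x ∂μ) * k y ∂ν := by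
  rw [← integral_indicator hA, integral_prod_symm _ ((integrable_indicator_iff hA).2 hint),
    ← integral_indicator hB]
  congr 1 with y
  simp_rw [indicator_setOf_snd_fst_apply]
  by_cases hy : y ∈ B
  · simp [hy, integral_indicator (hJ y), integral_mul_const]
  · simp [hy]

end Sections

def tfunRegion (α c : ℝ) : Set (ℝ × ℝ) := {z | z.1 ∈ Iic c ∧ z.2 ∈ Ioc 0 (z.1 ^ 2 / α ^ 2)}

section TfunRegion

variable {p α c : ℝ} {h : ℝ → ℝ}

theorem measurableSet_tfunRegion (α c : ℝ) : MeasurableSet (tfunRegion α c) := by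
  unfold tfunRegion
  simp only [mem_Iic, mem_Ioc, ofPred_and]
  exact (measurableSet_le measurable_fst measurable_const).inter
    ((measurableSet_lt measurable_const measurable_snd).inter
      (measurableSet_le measurable_snd (by fun_prop)))

theorem integrableOn_tfunRegion (hp : 0 < p) (hm : Measurable h)
    (hint : IntegrableOn (fun w => h w * Tfun p α w) (Iic c)) :
    IntegrableOn (fun z => h z.1 * gammaPDF p z.2) (tfunRegion α c) (volume.prod volume) := by
  refine integrableOn_prod_mul_of_sections (B := Iic c) (J := fun w => Ioc 0 (w ^ 2 / α ^ 2))
    (measurableSet_tfunRegion α c) measurableSet_Iic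
    (fun _ => measurableSet_Ioc) hm.aestronglyMeasurable
    (measurable_gammaPDF p).aestronglyMeasurable
    (fun _ _ => (integrableOn_gammaPDF_Ioi hp).mono_set Ioc_subset_Ioi_self)
    (hint.congr_fun (fun w _ => ?_) measurableSet_Iic)
  simp only [Tfun_eq_setIntegral]
  rw [setIntegral_congr_fun measurableSet_Ioc
    fun y hy => Real.norm_of_nonneg (gammaPDF_nonneg hp hy.1.le)]

theorem setIntegral_Iic_mul_Tfun_eq_setIntegral_tfunRegion (hp : 0 < p) (hm : Measurable h)
    (hint : IntegrableOn (fun w => h w * Tfun p α w) (Iic c)) :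
    ∫ w in Iic c, h w * Tfun p α w
      = ∫ z in tfunRegion α c, h z.1 * gammaPDF p z.2 ∂(volume.prod volume) := by
  rw [tfunRegion, setIntegral_prod_mul_of_sections (B := Iic c)
    (J := fun w => Ioc 0 (w ^ 2 / α ^ 2)) (measurableSet_tfunRegion α c) measurableSet_Iic
    (fun _ => measurableSet_Ioc) (integrableOn_tfunRegion hp hm hint)]
  simp_rw [Tfun_eq_setIntegral]

theorem tfunRegion_eq_union_of_neg (hα : 0 < α) (hc : c < 0) :
    tfunRegion α c = {z | z.2 ∈ Ioc 0 (c ^ 2 / α ^ 2) ∧ z.1 ∈ Iic c}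
      ∪ {z | z.2 ∈ Ioi (c ^ 2 / α ^ 2) ∧ z.1 ∈ Iic (-α * √z.2)} := by
  ext ⟨w, y⟩
  have hy : 0 < y ↔ 0 < α * √y := by rw [mul_pos_iff_of_pos_left hα, Real.sqrt_pos]
  simp only [tfunRegion, mem_ofPred_eq, mem_union, mem_Iic, mem_Ioc, mem_Ioi,
    le_sq_div_sq_iff hα, sq_div_sq_lt_iff hα, hy, neg_mul]
  have : 0 ≤ α * √y := by positivity
  generalize α * √y = a at *
  grind

theorem tfunRegion_eq_union_of_nonneg (hα : 0 < α) (hc : 0 ≤ c) :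
    tfunRegion α c = {z | z.2 ∈ Ioi 0 ∧ z.1 ∈ Iic (-α * √z.2)}
      ∪ {z | z.2 ∈ Ioc 0 (c ^ 2 / α ^ 2) ∧ z.1 ∈ Icc (α * √z.2) c} := by
  ext ⟨w, y⟩
  have hy : 0 < y ↔ 0 < α * √y := by rw [mul_pos_iff_of_pos_left hα, Real.sqrt_pos]
  simp only [tfunRegion, mem_ofPred_eq, mem_union, mem_Iic, mem_Ioc, mem_Ioi, mem_Icc,
    le_sq_div_sq_iff hα, hy, neg_mul]
  have : 0 ≤ α * √y := by positivity
  generalize α * √y = a at *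
  grind

end TfunRegion

section TruncatedTfunIntegral

variable {p α c : ℝ} {h : ℝ → ℝ}

theorem setIntegral_Iic_mul_Tfun_of_neg (hp : 0 < p) (hα : 0 < α) (hm : Measurable h)
    (hint : IntegrableOn (fun w => h w * Tfun p α w) (Iic c)) (hc : c < 0) :
    ∫ w in Iic c, h w * Tfun p α w
      = (∫ y in Ioc 0 (c ^ 2 / α ^ 2), (∫ w in Iic c, h w) * gammaPDF p y)
        + ∫ y in Ioi (c ^ 2 / α ^ 2), (∫ w in Iic (-α * √y), h w) * gammaPDF p y := by
  have hA₁ : MeasurableSet {z : ℝ × ℝ | z.2 ∈ Ioc 0 (c ^ 2 / α ^ 2) ∧ z.1 ∈ Iic c} :=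
    (measurable_snd measurableSet_Ioc).inter (measurable_fst measurableSet_Iic)
  have hA₂ : MeasurableSet {z : ℝ × ℝ | z.2 ∈ Ioi (c ^ 2 / α ^ 2) ∧ z.1 ∈ Iic (-α * √z.2)} :=
    (measurable_snd measurableSet_Ioi).inter (measurableSet_le measurable_fst (by fun_prop))
  have hdisj : Disjoint {z : ℝ × ℝ | z.2 ∈ Ioc 0 (c ^ 2 / α ^ 2) ∧ z.1 ∈ Iic c}
      {z : ℝ × ℝ | z.2 ∈ Ioi (c ^ 2 / α ^ 2) ∧ z.1 ∈ Iic (-α * √z.2)} :=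
    disjoint_left.2 fun _ h₁ h₂ => not_lt.2 h₁.1.2 h₂.1
  have hreg := integrableOn_tfunRegion hp hm hint
  rw [tfunRegion_eq_union_of_neg hα hc] at hreg
  rw [setIntegral_Iic_mul_Tfun_eq_setIntegral_tfunRegion hp hm hint,
    tfunRegion_eq_union_of_neg hα hc, setIntegral_union hdisj hA₂
      (hreg.mono_set subset_union_left) (hreg.mono_set subset_union_right),
    setIntegral_prod_mul_of_sections_symm hA₁ measurableSet_Ioc (fun _ => measurableSet_Iic)
      (hreg.mono_set subset_union_left),
    setIntegral_prod_mul_of_sections_symm (J := fun y => Iic (-α * √y)) hA₂ measurableSet_Ioi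
      (fun _ => measurableSet_Iic) (hreg.mono_set subset_union_right)]

theorem setIntegral_Iic_mul_Tfun_of_nonneg (hp : 0 < p) (hα : 0 < α) (hm : Measurable h)
    (hint : IntegrableOn (fun w => h w * Tfun p α w) (Iic c)) (hc : 0 ≤ c) :
    ∫ w in Iic c, h w * Tfun p α w
      = (∫ y in Ioi 0, (∫ w in Iic (-α * √y), h w) * gammaPDF p y)
        + ∫ y in Ioc 0 (c ^ 2 / α ^ 2), (∫ w in Icc (α * √y) c, h w) * gammaPDF p y := by
  have hA₁ : MeasurableSet {z : ℝ × ℝ | z.2 ∈ Ioi 0 ∧ z.1 ∈ Iic (-α * √z.2)} :=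
    (measurable_snd measurableSet_Ioi).inter (measurableSet_le measurable_fst (by fun_prop))
  have hA₂ : MeasurableSet
      {z : ℝ × ℝ | z.2 ∈ Ioc 0 (c ^ 2 / α ^ 2) ∧ z.1 ∈ Icc (α * √z.2) c} :=
    (measurable_snd measurableSet_Ioc).inter
      ((measurableSet_le (by fun_prop) measurable_fst).inter
        (measurable_fst measurableSet_Iic))
  have hdisj : Disjoint {z : ℝ × ℝ | z.2 ∈ Ioi 0 ∧ z.1 ∈ Iic (-α * √z.2)}
      {z : ℝ × ℝ | z.2 ∈ Ioc 0 (c ^ 2 / α ^ 2) ∧ z.1 ∈ Icc (α * √z.2) c} := by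
    refine disjoint_left.2 fun z h₁ h₂ => ?_
    have : 0 < α * √z.2 := mul_pos hα (Real.sqrt_pos.2 h₁.1)
    linarith [h₁.2.out, h₂.2.1]
  have hreg := integrableOn_tfunRegion hp hm hint
  rw [tfunRegion_eq_union_of_nonneg hα hc] at hreg
  rw [setIntegral_Iic_mul_Tfun_eq_setIntegral_tfunRegion hp hm hint,
    tfunRegion_eq_union_of_nonneg hα hc, setIntegral_union hdisj hA₂
      (hreg.mono_set subset_union_left) (hreg.mono_set subset_union_right),
    setIntegral_prod_mul_of_sections_symm (J := fun y => Iic (-α * √y)) hA₁ measurableSet_Ioi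
      (fun _ => measurableSet_Iic) (hreg.mono_set subset_union_left),
    setIntegral_prod_mul_of_sections_symm (J := fun y => Icc (α * √y) c) hA₂ measurableSet_Ioc
      (fun _ => measurableSet_Icc) (hreg.mono_set subset_union_right)]

end TruncatedTfunIntegral

section Density

variable {p μ σ α ρ δ : ℝ} {g : ℝ → ℝ}

theorem tdPDF_apply_mul_add (hσ : 0 < σ) (w : ℝ) :
    tdPDF p μ σ α ρ δ g (σ * w + μ) = (Znorm p σ α ρ δ g)⁻¹ * (g w * (ρ + δ * Tfun p α w)) := by
  rw [tdPDF, show (σ * w + μ - μ) / σ = w by field_simp; ring]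
  ring

theorem setIntegral_Iic_mul_tdPDF (hσ : 0 < σ) (L : ℝ → ℝ) (b : ℝ) :
    ∫ x in Iic b, L x * tdPDF p μ σ α ρ δ g x
      = σ / Znorm p σ α ρ δ g
        * ∫ w in Iic ((b - μ) / σ), L (σ * w + μ) * g w * (ρ + δ * Tfun p α w) := by
  have hpull : ∀ w, L (σ * w + μ) * tdPDF p μ σ α ρ δ g (σ * w + μ)
      = (Znorm p σ α ρ δ g)⁻¹ * (L (σ * w + μ) * g w * (ρ + δ * Tfun p α w)) := fun w => by
    rw [tdPDF_apply_mul_add hσ]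
    ring
  rw [setIntegral_Iic_comp_mul_add _ hσ μ b, smul_eq_mul]
  simp_rw [hpull, integral_const_mul]
  ring

theorem integrable_comp_mul_add_of_integrable_mul_tdPDF (hσ : 0 < σ) (hZ : Znorm p σ α ρ δ g ≠ 0)
    {L : ℝ → ℝ} (hL : Integrable fun x => L x * tdPDF p μ σ α ρ δ g x) :
    Integrable fun w => L (σ * w + μ) * g w * (ρ + δ * Tfun p α w) := by
  have hcomp := ((hL.comp_add_right μ).comp_mul_left' hσ.ne').const_mul (Znorm p σ α ρ δ g)
  refine hcomp.congr (ae_of_all _ fun w => ?_)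
  simp only [tdPDF_apply_mul_add hσ]
  field_simp

end Density

theorem stmt6_general (p μ σ α ρ δ : ℝ) (hp : 0 < p) (hσ : 0 < σ) (hα : 0 < α)
    (hρ : 0 ≤ ρ) (hδ : 0 ≤ δ)
    (g : ℝ → ℝ) (hgm : Measurable g)
    (L : ℝ → ℝ) (hLm : Measurable L)
    (hLint : Integrable (fun x => L x * tdPDF p μ σ α ρ δ g x))
    (b : ℝ) :
    (b < μ →
      (∫ x in Iic b, L x * tdPDF p μ σ α ρ δ g x)
        = (ρ * σ / Znorm p σ α ρ δ g)
            * (∫ w in Iic ((b - μ) / σ), L (σ * w + μ) * g w)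
          + (δ * σ / Znorm p σ α ρ δ g) *
              ((∫ y in (0:ℝ)..(((b - μ) / (α * σ)) ^ 2),
                  (∫ w in Iic ((b - μ) / σ), L (σ * w + μ) * g w) * gammaPDF p y)
                + (∫ y in Ici (((b - μ) / (α * σ)) ^ 2),
                    (∫ w in Iic (-α * Real.sqrt y), L (σ * w + μ) * g w) * gammaPDF p y)))
    ∧ (μ ≤ b →
      (∫ x in Iic b, L x * tdPDF p μ σ α ρ δ g x)
        = (ρ * σ / Znorm p σ α ρ δ g)
            * (∫ w in Iic ((b - μ) / σ), L (σ * w + μ) * g w)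
          + (δ * σ / Znorm p σ α ρ δ g) *
              ((∫ y in Ioi (0:ℝ),
                  (∫ w in Iic (-α * Real.sqrt y), L (σ * w + μ) * g w) * gammaPDF p y)
                + (∫ y in (0:ℝ)..(((b - μ) / (α * σ)) ^ 2),
                    (∫ w in Icc (α * Real.sqrt y) ((b - μ) / σ),
                      L (σ * w + μ) * g w) * gammaPDF p y))) := by
  have hm : Measurable fun w => L (σ * w + μ) * g w := by fun_prop
  have hTm := measurable_Tfun hp α
  rw [setIntegral_Iic_mul_tdPDF hσ]
  rcases eq_or_ne (Znorm p σ α ρ δ g) 0 with hZ | hZ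
  · -- both sides vanish, through `x / 0 = 0`
    simp [hZ]
  have hint := (integrable_comp_mul_add_of_integrable_mul_tdPDF hσ hZ hLint).integrableOn
    (s := Iic ((b - μ) / σ))
  have hδT := (integrableOn_of_integrableOn_mul_add hρ hδ (Tfun_nonneg hp α)
    hm.aestronglyMeasurable hTm.aestronglyMeasurable hint).2
  have ht : ((b - μ) / (α * σ)) ^ 2 = ((b - μ) / σ) ^ 2 / α ^ 2 := by
    field_simp
  rw [setIntegral_mul_add hρ hδ (Tfun_nonneg hp α) hm.aestronglyMeasurable
    hTm.aestronglyMeasurable hint, ht]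
  rcases eq_or_ne δ 0 with rfl | hδ0
  · constructor <;> intro <;> ring
  have hT := (integrable_const_mul_iff (isUnit_iff_ne_zero.2 hδ0) _).1 hδT
  refine ⟨fun hb => ?_, fun hb => ?_⟩
  · rw [intervalIntegral.integral_of_le (by positivity), integral_Ici_eq_integral_Ioi,
      setIntegral_Iic_mul_Tfun_of_neg hp hα hm hT (div_neg_of_neg_of_pos (sub_neg.2 hb) hσ)]
    ring
  · rw [intervalIntegral.integral_of_le (by positivity),
      setIntegral_Iic_mul_Tfun_of_nonneg hp hα hm hT (div_nonneg (sub_nonneg.2 hb) hσ.le)]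
    ring

/-- truncated-expectation representation of `E[𝟙{X ≤ b} L(X)]`. -/
theorem stmt6 (p μ σ α ρ δ : ℝ) (hp : 0 < p) (hσ : 0 < σ) (hα : 0 < α)
    (hρ : 0 ≤ ρ) (hδ : 0 ≤ δ) (hρδ : 0 < ρ + δ)
    (g : ℝ → ℝ) (hg0 : ∀ x, 0 ≤ g x) (hgm : Measurable g)
    (hgi : Integrable g) (hg1 : (∫ x : ℝ, g x) = 1)
    (L : ℝ → ℝ) (hLm : Measurable L)
    (hLint : Integrable (fun x => L x * tdPDF p μ σ α ρ δ g x))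
    (b : ℝ) :
    (b < μ →
      (∫ x in Iic b, L x * tdPDF p μ σ α ρ δ g x)
        = (ρ * σ / Znorm p σ α ρ δ g)
            * (∫ w in Iic ((b - μ) / σ), L (σ * w + μ) * g w)
          + (δ * σ / Znorm p σ α ρ δ g) *
              ((∫ y in (0:ℝ)..(((b - μ) / (α * σ)) ^ 2),
                  (∫ w in Iic ((b - μ) / σ), L (σ * w + μ) * g w) * gammaPDF p y)
                + (∫ y in Ici (((b - μ) / (α * σ)) ^ 2),
                    (∫ w in Iic (-α * Real.sqrt y), L (σ * w + μ) * g w) * gammaPDF p y)))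
    ∧ (μ ≤ b →
      (∫ x in Iic b, L x * tdPDF p μ σ α ρ δ g x)
        = (ρ * σ / Znorm p σ α ρ δ g)
            * (∫ w in Iic ((b - μ) / σ), L (σ * w + μ) * g w)
          + (δ * σ / Znorm p σ α ρ δ g) *
              ((∫ y in Ioi (0:ℝ),
                  (∫ w in Iic (-α * Real.sqrt y), L (σ * w + μ) * g w) * gammaPDF p y)
                + (∫ y in (0:ℝ)..(((b - μ) / (α * σ)) ^ 2),
                    (∫ w in Icc (α * Real.sqrt y) ((b - μ) / σ),
                      L (σ * w + μ) * g w) * gammaPDF p y))) :=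
  stmt6_general p μ σ α ρ δ hp hσ hα hρ hδ g hgm L hLm hLint b
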